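/- Geometric measure of maximally correlated generalized Bell diagonal states: let d ≥ 2, let |Ψ_k⟩ = (1/√d) Σ_{j=0}^{d−1} e^{2πi kj/d} |j⟩ ⊗ |j⟩ for k = 0, …, d−1, and let ρ = Σ_{k=0}^{d−1} p_k |Ψ_k⟩⟨Ψ_k| for an arbitrary probability distribution (p_0, …, p_{d−1}). Then Λ²(ρ) = 1/d, i.e., G(ρ) = log₂ d; moreover for every positive integer n, Λ²(ρ^{⊗n}) = d^{−n}, so that G^∞(ρ) = G(ρ) = log₂ d. -/

import Mathlib

open scoped BigOperators ComplexOrder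

namespace Paper

/-- `a` is an ℓ²-normalized (unit) vector. -/
def IsUnitVec {n : Type*} [Fintype n] (a : n → ℂ) : Prop :=
  ∑ x, ‖a x‖ ^ 2 = 1

/-- A density matrix: positive semidefinite with trace 1. -/
def IsDensityMatrix {n : Type*} [Fintype n] (ρ : Matrix n n ℂ) : Prop :=
  ρ.PosSemidef ∧ ρ.trace = 1

/-- ⟨φ|ρ|φ⟩ (its real part). -/
noncomputable def overlap {n : Type*} [Fintype n] (ρ : Matrix n n ℂ) (φ : n → ℂ) : ℝ :=
  (dotProduct (star φ) (ρ.mulVec φ)).re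

/-- The bipartite product vector a ⊗ b. -/
def biProd {α β : Type*} (a : α → ℂ) (b : β → ℂ) : α × β → ℂ :=
  fun p => a p.1 * b p.2

/-- Λ²(ρ) for a bipartite state: maximal overlap with product vectors. -/
noncomputable def biMaxOverlap {α β : Type*} [Fintype α] [Fintype β]
    (ρ : Matrix (α × β) (α × β) ℂ) : ℝ :=
  sSup {r : ℝ | ∃ (a : α → ℂ) (b : β → ℂ), IsUnitVec a ∧ IsUnitVec b ∧
    r = overlap ρ (biProd a b)}

/-- The geometric measure G(ρ) = −log₂ Λ²(ρ) of a bipartite state. -/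
noncomputable def biGm {α β : Type*} [Fintype α] [Fintype β]
    (ρ : Matrix (α × β) (α × β) ℂ) : ℝ :=
  -Real.logb 2 (biMaxOverlap ρ)

/-- The outer product |ψ⟩⟨ψ|. -/
def outer {n : Type*} (ψ : n → ℂ) : Matrix n n ℂ :=
  fun i i' => ψ i * starRingEnd ℂ (ψ i')

/-- The standard basis vector |x⟩. -/
def basisVec {n : Type*} [DecidableEq n] (x : n) : n → ℂ :=
  fun y => if y = x then 1 else 0

/-- The n-fold tensor power of a bipartite state, regarded as bipartite by grouping
the n copies of each of the two parties. -/
def biTensorPow {d : ℕ} (ρ : Matrix (Fin d × Fin d) (Fin d × Fin d) ℂ) (n : ℕ) :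
    Matrix ((Fin n → Fin d) × (Fin n → Fin d)) ((Fin n → Fin d) × (Fin n → Fin d)) ℂ :=
  fun i i' => ∏ k, ρ (i.1 k, i.2 k) (i'.1 k, i'.2 k)

/-- The generalized Bell state |Ψ_k⟩ = (1/√d) Σ_j e^{2πi kj/d} |j⟩⊗|j⟩. -/
noncomputable def bellMC (d : ℕ) (k : Fin d) : Fin d × Fin d → ℂ := fun p =>
  if p.1 = p.2 then
    ((1 / Real.sqrt d : ℝ) : ℂ) *
      Complex.exp (2 * Real.pi * Complex.I * ((k : ℕ) : ℂ) * ((p.1 : ℕ) : ℂ) / (d : ℂ))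
  else 0

/-- The maximally correlated generalized Bell diagonal state Σ_k p_k |Ψ_k⟩⟨Ψ_k|. -/
noncomputable def mcBellDiag (d : ℕ) (p : Fin d → ℝ) :
    Matrix (Fin d × Fin d) (Fin d × Fin d) ℂ :=
  ∑ k, ((p k : ℝ) : ℂ) • outer (bellMC d k)

lemma isUnitVec_basisVec {α : Type*} [Fintype α] [DecidableEq α] (x : α) :
    IsUnitVec (basisVec x) := by
  simp only [IsUnitVec, basisVec, apply_ite (fun z : ℂ => ‖z‖ ^ 2), norm_one, norm_zero,
    one_pow]
  simp [Finset.sum_ite_eq']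

lemma overlap_basisVec {α : Type*} [Fintype α] [DecidableEq α]
    (ρ : Matrix α α ℂ) (v : α) : overlap ρ (basisVec v) = (ρ v v).re := by
  simp [overlap, dotProduct, Matrix.mulVec, basisVec, apply_ite,
    mul_ite, ite_mul, Finset.sum_ite_eq, Finset.sum_ite_eq']

lemma biProd_basisVec {α : Type*} [DecidableEq α] (x : α) :
    biProd (basisVec x) (basisVec x) = basisVec (x, x) := by
  funext p
  rcases p with ⟨i, j⟩
  simp only [biProd, basisVec, Prod.mk.injEq]
  by_cases h1 : i = x <;> by_cases h2 : j = x <;> simp [h1, h2]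

lemma overlap_le_bound {α : Type*} [Fintype α] [DecidableEq α]
    (ρ : Matrix (α × α) (α × α) ℂ) (c : ℝ) (hc : 0 ≤ c)
    (h0 : ∀ p q : α × α, (p.1 ≠ p.2 ∨ q.1 ≠ q.2) → ρ p q = 0)
    (h1 : ∀ i j : α, ‖ρ (i, i) (j, j)‖ ≤ c)
    (a b : α → ℂ) (ha : IsUnitVec a) (hb : IsUnitVec b) :
    overlap ρ (biProd a b) ≤ c := by
  classical
  set φ := biProd a b with hφ
  set D : α × α → ℝ := fun p => if p.1 = p.2 then ‖φ p‖ else 0 with hD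
  have hDnn : ∀ p, 0 ≤ D p := by
    intro p; simp only [hD]; split <;> positivity
  have step1 : overlap ρ φ ≤ ∑ p, ∑ q, ‖φ p‖ * (‖ρ p q‖ * ‖φ q‖) := by
    have h2 : overlap ρ φ ≤ ‖dotProduct (star φ) (ρ.mulVec φ)‖ :=
      Complex.re_le_norm _
    refine h2.trans ?_
    rw [dotProduct]
    refine (norm_sum_le _ _).trans ?_
    refine Finset.sum_le_sum fun p _ => ?_
    rw [norm_mul, Pi.star_apply, norm_star]
    refine le_trans ?_ (le_of_eq (Finset.mul_sum _ _ _))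
    refine mul_le_mul_of_nonneg_left ?_ (norm_nonneg _)
    rw [Matrix.mulVec, dotProduct]
    refine (norm_sum_le _ _).trans ?_
    refine Finset.sum_le_sum fun q _ => le_of_eq (norm_mul _ _)
  have step2 : ∑ p, ∑ q, ‖φ p‖ * (‖ρ p q‖ * ‖φ q‖) ≤ ∑ p, ∑ q, (c * D p) * D q := by
    refine Finset.sum_le_sum fun p _ => Finset.sum_le_sum fun q _ => ?_
    by_cases hp : p.1 = p.2
    · by_cases hq : q.1 = q.2
      · have hp' : p = (p.1, p.1) := Prod.ext rfl hp.symm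
        have hq' : q = (q.1, q.1) := Prod.ext rfl hq.symm
        have hρ : ‖ρ p q‖ ≤ c := by rw [hp', hq']; exact h1 _ _
        have hDp : D p = ‖φ p‖ := by simp [hD, hp]
        have hDq : D q = ‖φ q‖ := by simp [hD, hq]
        rw [hDp, hDq]
        calc ‖φ p‖ * (‖ρ p q‖ * ‖φ q‖) ≤ ‖φ p‖ * (c * ‖φ q‖) :=
              mul_le_mul_of_nonneg_left
                (mul_le_mul_of_nonneg_right hρ (norm_nonneg _)) (norm_nonneg _)
          _ = c * ‖φ p‖ * ‖φ q‖ := by ring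
      · rw [h0 p q (Or.inr hq)]
        simp only [norm_zero, zero_mul, mul_zero]
        positivity
    · rw [h0 p q (Or.inl hp)]
      simp only [norm_zero, zero_mul, mul_zero]
      positivity
  have hsum : ∑ p : α × α, D p = ∑ i, ‖a i‖ * ‖b i‖ := by
    rw [Fintype.sum_prod_type]
    refine Finset.sum_congr rfl fun i _ => ?_
    rw [Finset.sum_eq_single i]
    · simp [hD, hφ, biProd]
    · intro j _ hj; simp [hD, Ne.symm hj]
    · simp
  set s : ℝ := ∑ i, ‖a i‖ * ‖b i‖ with hs
  have hs1 : s ≤ 1 := by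
    have hcs := Finset.sum_mul_sq_le_sq_mul_sq Finset.univ (fun i => ‖a i‖) (fun i => ‖b i‖)
    rw [ha, hb, mul_one] at hcs
    have hsnn : 0 ≤ s := Finset.sum_nonneg fun i _ => by positivity
    nlinarith
  have hsnn : 0 ≤ s := Finset.sum_nonneg fun i _ => by positivity
  have step3 : ∑ p, ∑ q, (c * D p) * D q = c * s * s := by
    rw [← Finset.sum_mul_sum]
    rw [show (∑ p : α × α, c * D p) = c * ∑ p : α × α, D p by rw [Finset.mul_sum]]
    rw [hsum]
  calc overlap ρ φ ≤ ∑ p, ∑ q, ‖φ p‖ * (‖ρ p q‖ * ‖φ q‖) := step1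
    _ ≤ ∑ p, ∑ q, (c * D p) * D q := step2
    _ = c * s * s := step3
    _ ≤ c := by
          have t1 : c * s ≤ c * 1 := mul_le_mul_of_nonneg_left hs1 hc
          have t2 : (c * s) * s ≤ (c * s) * 1 :=
            mul_le_mul_of_nonneg_left hs1 (mul_nonneg hc hsnn)
          rw [mul_one] at t1 t2
          linarith

lemma biMaxOverlap_eq {α : Type*} [Fintype α] [DecidableEq α]
    (ρ : Matrix (α × α) (α × α) ℂ) (c : ℝ) (hc : 0 ≤ c) (x : α)
    (h0 : ∀ p q : α × α, (p.1 ≠ p.2 ∨ q.1 ≠ q.2) → ρ p q = 0)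
    (h1 : ∀ i j : α, ‖ρ (i, i) (j, j)‖ ≤ c)
    (h2 : ρ (x, x) (x, x) = (c : ℂ)) :
    biMaxOverlap ρ = c := by
  apply le_antisymm
  · apply Real.sSup_le _ hc
    rintro r ⟨a, b, ha, hb, rfl⟩
    exact overlap_le_bound ρ c hc h0 h1 a b ha hb
  · apply le_csSup
    · refine ⟨c, ?_⟩
      rintro r ⟨a, b, ha, hb, rfl⟩
      exact overlap_le_bound ρ c hc h0 h1 a b ha hb
    · refine ⟨basisVec x, basisVec x, isUnitVec_basisVec x, isUnitVec_basisVec x, ?_⟩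
      rw [biProd_basisVec, overlap_basisVec, h2, Complex.ofReal_re]


lemma norm_bell_exp (d k j : ℕ) :
    ‖Complex.exp (2 * Real.pi * Complex.I * (k : ℂ) * (j : ℂ) / (d : ℂ))‖ = 1 := by
  have h : (2 * Real.pi * Complex.I * (k : ℂ) * (j : ℂ) / (d : ℂ))
      = ((2 * Real.pi * k * j / d : ℝ) : ℂ) * Complex.I := by push_cast; ring
  rw [h, Complex.norm_exp_ofReal_mul_I]

lemma norm_bellMC_diag (d : ℕ) (k : Fin d) (i : Fin d) :
    ‖bellMC d k (i, i)‖ = 1 / Real.sqrt d := by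
  simp only [bellMC, if_true, norm_mul, Complex.norm_real, norm_bell_exp, mul_one,
    Real.norm_eq_abs]
  rw [abs_of_nonneg (by positivity)]

lemma sqrt_inv_mul (d : ℕ) : (1 / Real.sqrt d) * (1 / Real.sqrt d) = 1 / d := by
  rw [div_mul_div_comm, one_mul, Real.mul_self_sqrt (by positivity)]

lemma mcBellDiag_apply (d : ℕ) (p : Fin d → ℝ) (x y : Fin d × Fin d) :
    mcBellDiag d p x y = ∑ k, ((p k : ℝ) : ℂ) * (bellMC d k x * starRingEnd ℂ (bellMC d k y)) := by
  simp [mcBellDiag, Matrix.sum_apply, outer]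

lemma mcBellDiag_offdiag (d : ℕ) (p : Fin d → ℝ) (x y : Fin d × Fin d)
    (h : x.1 ≠ x.2 ∨ y.1 ≠ y.2) : mcBellDiag d p x y = 0 := by
  rw [mcBellDiag_apply]
  refine Finset.sum_eq_zero fun k _ => ?_
  rcases h with h | h
  · rw [show bellMC d k x = 0 from if_neg h]; ring
  · rw [show bellMC d k y = 0 from if_neg h]; simp

lemma mcBellDiag_norm_le (d : ℕ) (p : Fin d → ℝ) (hp : ∀ k, 0 ≤ p k)
    (hp1 : ∑ k, p k = 1) (i j : Fin d) :
    ‖mcBellDiag d p (i, i) (j, j)‖ ≤ 1 / d := by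
  rw [mcBellDiag_apply]
  refine (norm_sum_le _ _).trans ?_
  have key : ∀ k : Fin d,
      ‖((p k : ℝ) : ℂ) * (bellMC d k (i, i) * starRingEnd ℂ (bellMC d k (j, j)))‖
        = p k * (1 / d) := by
    intro k
    rw [norm_mul, norm_mul, RingHomIsometric.norm_map, norm_bellMC_diag, norm_bellMC_diag,
      Complex.norm_real, Real.norm_eq_abs, abs_of_nonneg (hp k), sqrt_inv_mul]
  rw [Finset.sum_congr rfl fun k _ => key k, ← Finset.sum_mul, hp1, one_mul]

lemma mcBellDiag_diag (d : ℕ) (p : Fin d → ℝ) (hp1 : ∑ k, p k = 1) (x : Fin d) :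
    mcBellDiag d p (x, x) (x, x) = ((1 / d : ℝ) : ℂ) := by
  rw [mcBellDiag_apply]
  have key : ∀ k : Fin d,
      bellMC d k (x, x) * starRingEnd ℂ (bellMC d k (x, x)) = ((1 / d : ℝ) : ℂ) := by
    intro k
    rw [Complex.mul_conj, Complex.normSq_eq_norm_sq, norm_bellMC_diag]
    norm_cast
    rw [sq, sqrt_inv_mul]
  calc ∑ k, ((p k : ℝ) : ℂ) * (bellMC d k (x, x) * starRingEnd ℂ (bellMC d k (x, x)))
      = ∑ k, ((p k : ℝ) : ℂ) * ((1 / d : ℝ) : ℂ) :=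
        Finset.sum_congr rfl fun k _ => by rw [key k]
    _ = ((1 / d : ℝ) : ℂ) := by
        rw [← Finset.sum_mul, ← Complex.ofReal_sum, hp1, Complex.ofReal_one, one_mul]



lemma biTensorPow_offdiag {d : ℕ} (ρ : Matrix (Fin d × Fin d) (Fin d × Fin d) ℂ)
    (h0 : ∀ p q : Fin d × Fin d, (p.1 ≠ p.2 ∨ q.1 ≠ q.2) → ρ p q = 0) (n : ℕ)
    (x y : (Fin n → Fin d) × (Fin n → Fin d)) (h : x.1 ≠ x.2 ∨ y.1 ≠ y.2) :
    biTensorPow ρ n x y = 0 := by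
  rcases h with h | h
  · obtain ⟨k, hk⟩ := Function.ne_iff.mp h
    exact Finset.prod_eq_zero (Finset.mem_univ k) (h0 _ _ (Or.inl hk))
  · obtain ⟨k, hk⟩ := Function.ne_iff.mp h
    exact Finset.prod_eq_zero (Finset.mem_univ k) (h0 _ _ (Or.inr hk))

lemma biTensorPow_norm_le {d : ℕ} (ρ : Matrix (Fin d × Fin d) (Fin d × Fin d) ℂ)
    (c : ℝ) (hc : 0 ≤ c) (h1 : ∀ i j : Fin d, ‖ρ (i, i) (j, j)‖ ≤ c) (n : ℕ)
    (f g : Fin n → Fin d) :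
    ‖biTensorPow ρ n (f, f) (g, g)‖ ≤ c ^ n := by
  rw [biTensorPow, norm_prod]
  calc ∏ k, ‖ρ (f k, f k) (g k, g k)‖ ≤ ∏ _k : Fin n, c :=
        Finset.prod_le_prod (fun k _ => norm_nonneg _) (fun k _ => h1 _ _)
    _ = c ^ n := by simp

lemma biTensorPow_diag {d : ℕ} (ρ : Matrix (Fin d × Fin d) (Fin d × Fin d) ℂ)
    (c : ℝ) (x : Fin d) (h2 : ρ (x, x) (x, x) = (c : ℂ)) (n : ℕ) :
    biTensorPow ρ n (fun _ => x, fun _ => x) (fun _ => x, fun _ => x) = ((c ^ n : ℝ) : ℂ) := by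
  rw [biTensorPow]
  simp [h2]

lemma mcBellDiag_maxOverlap_pow {d : ℕ} (hd : 2 ≤ d) (p : Fin d → ℝ)
    (hp : ∀ k, 0 ≤ p k) (hp1 : ∑ k, p k = 1) (n : ℕ) :
    biMaxOverlap (biTensorPow (mcBellDiag d p) n) = (1 / (d : ℝ)) ^ n := by
  have x0 : Fin d := ⟨0, by omega⟩
  exact biMaxOverlap_eq _ ((1 / (d : ℝ)) ^ n) (by positivity) (fun _ => x0)
    (biTensorPow_offdiag _ (mcBellDiag_offdiag d p) n)
    (fun f g => biTensorPow_norm_le _ _ (by positivity)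
      (mcBellDiag_norm_le d p hp hp1) n f g)
    (by
      rw [biTensorPow_diag (mcBellDiag d p) (1 / (d : ℝ)) x0
        (mcBellDiag_diag d p hp1 x0) n])

/-- **Geometric measure of maximally correlated generalized Bell diagonal states.**
Λ²(ρ) = 1/d, i.e. G(ρ) = log₂ d; moreover Λ²(ρ^{⊗n}) = d^{−n} for all n ≥ 1, so
G^∞(ρ) = G(ρ) = log₂ d. -/
theorem gm_mcBellDiag {d : ℕ} (hd : 2 ≤ d) (p : Fin d → ℝ)
    (hp : ∀ k, 0 ≤ p k) (hp1 : ∑ k, p k = 1) :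
    biMaxOverlap (mcBellDiag d p) = 1 / d ∧
    biGm (mcBellDiag d p) = Real.logb 2 d ∧
    (∀ n : ℕ, 0 < n → biMaxOverlap (biTensorPow (mcBellDiag d p) n) = 1 / (d : ℝ) ^ n) ∧
    Filter.Tendsto (fun n : ℕ => biGm (biTensorPow (mcBellDiag d p) n) / (n : ℝ))
      Filter.atTop (nhds (Real.logb 2 d)) := by
  have x0 : Fin d := ⟨0, by omega⟩
  have hmain : biMaxOverlap (mcBellDiag d p) = 1 / d :=
    biMaxOverlap_eq _ (1 / (d : ℝ)) (by positivity) x0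
      (mcBellDiag_offdiag d p) (mcBellDiag_norm_le d p hp hp1)
      (mcBellDiag_diag d p hp1 x0)
  have htp : ∀ n : ℕ, biMaxOverlap (biTensorPow (mcBellDiag d p) n) = (1 / (d : ℝ)) ^ n :=
    mcBellDiag_maxOverlap_pow hd p hp hp1
  have hev : ∀ n : ℕ, 1 ≤ n →
      biGm (biTensorPow (mcBellDiag d p) n) / (n : ℝ) = Real.logb 2 d := by
    intro n hn
    have hn' : (n : ℝ) ≠ 0 := Nat.cast_ne_zero.mpr (by omega)
    rw [biGm, htp n, one_div, inv_pow, Real.logb_inv, neg_neg, Real.logb_pow]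
    field_simp
  refine ⟨hmain, ?_, ?_, ?_⟩
  · rw [biGm, hmain, one_div, Real.logb_inv, neg_neg]
  · intro n hn
    rw [htp n, one_div, inv_pow, one_div]
  · refine Filter.Tendsto.congr' ?_ tendsto_const_nhds
    filter_upwards [Filter.eventually_ge_atTop 1] with n hn
    exact (hev n hn).symm

end Paper
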